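/- Let g be a (G,ε)-color Lie algebra, U(g) its universal enveloping algebra with its canonical filtration (U(g)_n)_n, and gr(U(g)) = ⊕_n U(g)_n/U(g)_{n−1} the associated graded algebra with canonical projections π_n : U(g)_n → gr^n(U(g)). Then the bracket defined on homogeneous filtration classes by {û, v̂} := π_{n+m−1}(uv − ε(|u|,|v|)vu), for u ∈ U(g)_n, v ∈ U(g)_m with û = π_n(u), v̂ = π_m(v), is well defined and makes gr(U(g)) a (G,ε)-color Poisson algebra; moreover on gr¹(U(g)) it recovers the color Lie bracket of g. -/

import Mathlib

open scoped DirectSum TensorProduct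

/-! Common definitions: color Lie algebras over an abelian group `G` with an
antisymmetric bicharacter `ε`, their universal enveloping algebras, the canonical
filtration and associated graded objects, and formal graded deformations. -/

/-- An antisymmetric bicharacter `ε : G × G → Rˣ` (values taken in `R`). -/
def IsBicharacter {R : Type*} [CommRing R] {G : Type*} [CommGroup G]
    (ε : G → G → R) : Prop :=
  (∀ g h, ε g h * ε h g = 1) ∧
  (∀ g h k, ε g (h * k) = ε g h * ε g k) ∧
  (∀ g h k, ε (g * h) k = ε g k * ε h k)

/-- A `(G,ε)`-color Lie algebra structure on an `R`-module `L`: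
a `G`-grading (with `L` the internal direct sum of the homogeneous components),
together with a bilinear bracket which respects the grading, is `ε`-antisymmetric
and satisfies the `ε`-Jacobi identity on homogeneous elements. -/
structure ColorLie (R : Type*) [CommRing R] (G : Type*) [CommGroup G] [DecidableEq G]
    (ε : G → G → R) (L : Type*) [AddCommGroup L] [Module R L] : Type _ where
  grading : G → Submodule R L
  internal : DirectSum.IsInternal grading
  bracket : L →ₗ[R] L →ₗ[R] L
  bracket_grade : ∀ {g h : G} {a b : L}, a ∈ grading g → b ∈ grading h →
    bracket a b ∈ grading (g * h)
  bracket_antisymm : ∀ {g h : G} {a b : L}, a ∈ grading g → b ∈ grading h →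
    bracket a b = -(ε g h) • bracket b a
  bracket_jacobi : ∀ {g h k : G} {a b c : L}, a ∈ grading g → b ∈ grading h →
    c ∈ grading k →
    ε k g • bracket a (bracket b c) + ε g h • bracket b (bracket c a) +
      ε h k • bracket c (bracket a b) = 0

namespace ColorLie

variable {R : Type*} [CommRing R] {G : Type*} [CommGroup G] [DecidableEq G]
  {ε : G → G → R} {L : Type*} [AddCommGroup L] [Module R L]

/-- The relation on the tensor algebra whose induced quotient is the universal
enveloping algebra: `a ⊗ b - ε(|a|,|b|) b ⊗ a ~ [a,b]` for homogeneous `a, b`. -/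
inductive Rel (cl : ColorLie R G ε L) :
    TensorAlgebra R L → TensorAlgebra R L → Prop
  | mk {g h : G} {a b : L} (ha : a ∈ cl.grading g) (hb : b ∈ cl.grading h) :
      Rel cl (TensorAlgebra.ι R a * TensorAlgebra.ι R b
          - ε g h • (TensorAlgebra.ι R b * TensorAlgebra.ι R a))
        (TensorAlgebra.ι R (cl.bracket a b))

/-- The universal enveloping algebra `U(L) = T(L)/J(L)` of a color Lie algebra. -/
abbrev U (cl : ColorLie R G ε L) : Type _ := RingQuot cl.Rel

noncomputable instance U.instRingU (cl : ColorLie R G ε L) : Ring cl.U := RingQuot.instRing cl.Rel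

/-- The canonical map `i : L → U(L)`. -/
noncomputable def ιU (cl : ColorLie R G ε L) : L →ₗ[R] cl.U :=
  (RingQuot.mkAlgHom R cl.Rel).toLinearMap ∘ₗ TensorAlgebra.ι R

/-- The relation on the tensor algebra defining the color symmetric algebra:
`a ⊗ b ~ ε(|a|,|b|) b ⊗ a` for homogeneous `a, b`. -/
inductive SymRel (cl : ColorLie R G ε L) :
    TensorAlgebra R L → TensorAlgebra R L → Prop
  | mk {g h : G} {a b : L} (ha : a ∈ cl.grading g) (hb : b ∈ cl.grading h) :
      SymRel cl (TensorAlgebra.ι R a * TensorAlgebra.ι R b)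
        (ε g h • (TensorAlgebra.ι R b * TensorAlgebra.ι R a))

/-- The color symmetric algebra `S(L) = T(L)/I(L)`. -/
abbrev SymAlg (cl : ColorLie R G ε L) : Type _ := RingQuot cl.SymRel

/-- The canonical map `L → S(L)`. -/
noncomputable def ιS (cl : ColorLie R G ε L) : L →ₗ[R] cl.SymAlg :=
  (RingQuot.mkAlgHom R cl.SymRel).toLinearMap ∘ₗ TensorAlgebra.ι R

/-- The degree-`g` component of the `G`-grading of `U(L)`: the span of the
monomials `i(a₁) ⋯ i(aₖ)` with `aⱼ` homogeneous and the product of the degrees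
equal to `g`. -/
noncomputable def Udeg (cl : ColorLie R G ε L) (g : G) : Submodule R cl.U :=
  Submodule.span R { x : cl.U | ∃ l : List (G × L),
    (∀ p ∈ l, p.2 ∈ cl.grading p.1) ∧ (l.map Prod.fst).prod = g ∧
    x = (l.map fun p => cl.ιU p.2).prod }

/-- The `n`-th piece `U^n(L)` of the canonical filtration of `U(L)`: the span of
products of at most `n` elements of (the image of) `L`. -/
noncomputable def Ufilt (cl : ColorLie R G ε L) (n : ℕ) : Submodule R cl.U :=
  Submodule.span R { x : cl.U | ∃ l : List L, l.length ≤ n ∧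
    x = (l.map fun a => cl.ιU a).prod }

/-- `U^{n-1}(L)`, with the convention `U^{-1}(L) = 0`. -/
noncomputable def UfiltPred (cl : ColorLie R G ε L) : ℕ → Submodule R cl.U
  | 0 => ⊥
  | n + 1 => cl.Ufilt n

/-- `U^{n-1}(L)` viewed as a submodule of `U^n(L)`. -/
noncomputable def grSub (cl : ColorLie R G ε L) (n : ℕ) : Submodule R (cl.Ufilt n) :=
  Submodule.comap (cl.Ufilt n).subtype (cl.UfiltPred n)

/-- The `n`-th piece `gr^n(U(L)) = U^n(L)/U^{n-1}(L)` of the associated graded algebra. -/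
abbrev grU (cl : ColorLie R G ε L) (n : ℕ) : Type _ := cl.Ufilt n ⧸ cl.grSub n

/-- The canonical projection `π_n : U^n(L) → gr^n(U(L))`. -/
noncomputable def πgr (cl : ColorLie R G ε L) (n : ℕ) : cl.Ufilt n →ₗ[R] cl.grU n :=
  (cl.grSub n).mkQ

/-- The degree-`g` component (for `g ∈ G`) of `gr^n(U(L))`. -/
noncomputable def grUdeg (cl : ColorLie R G ε L) (n : ℕ) (g : G) :
    Submodule R (cl.grU n) :=
  Submodule.map (cl.grSub n).mkQ
    (Submodule.comap (cl.Ufilt n).subtype (cl.Udeg g))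

/-- The `(ℕ,G)`-bigraded piece of the color symmetric algebra: span of products of
exactly `n` generators (for the ℕ-grading). -/
noncomputable def SdegZ (cl : ColorLie R G ε L) (n : ℕ) : Submodule R cl.SymAlg :=
  Submodule.span R { x : cl.SymAlg | ∃ l : List L, l.length = n ∧
    x = (l.map fun a => cl.ιS a).prod }

/-- The degree-`g` component of the `G`-grading of `S(L)`. -/
noncomputable def SdegG (cl : ColorLie R G ε L) (g : G) : Submodule R cl.SymAlg :=
  Submodule.span R { x : cl.SymAlg | ∃ l : List (G × L),
    (∀ p ∈ l, p.2 ∈ cl.grading p.1) ∧ (l.map Prod.fst).prod = g ∧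
    x = (l.map fun p => cl.ιS p.2).prod }

/-- A graded deformation `μ_t = Σ tⁿ μ_n` of a color Lie algebra `(L, μ₀)`:
every coefficient `μ_n` is a bilinear map of degree `e`, the family is
`ε`-antisymmetric and satisfies the `ε`-Jacobi identity order by order in `t`,
and `μ 0` is the original bracket. -/
structure Deformation (cl : ColorLie R G ε L) : Type _ where
  μ : ℕ → L →ₗ[R] L →ₗ[R] L
  init : μ 0 = cl.bracket
  graded : ∀ (n : ℕ) {g h : G} {a b : L}, a ∈ cl.grading g → b ∈ cl.grading h →
    μ n a b ∈ cl.grading (g * h)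
  antisymm : ∀ (n : ℕ) {g h : G} {a b : L}, a ∈ cl.grading g → b ∈ cl.grading h →
    μ n a b = -(ε g h) • μ n b a
  jacobi : ∀ (r : ℕ) {g h k : G} {a b c : L}, a ∈ cl.grading g →
    b ∈ cl.grading h → c ∈ cl.grading k →
    ∑ s ∈ Finset.range (r + 1),
      (ε k g • μ s a (μ (r - s) b c) + ε g h • μ s b (μ (r - s) c a) +
        ε h k • μ s c (μ (r - s) a b)) = 0

/-- A graded deformation is trivial iff it is equivalent to the undeformed bracket
via a graded formal automorphism `f = id + t f₁ + t² f₂ + ⋯` with each `f_n` of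
degree `e`. -/
def Deformation.IsTrivial {cl : ColorLie R G ε L} (D : cl.Deformation) : Prop :=
  ∃ f : ℕ → L →ₗ[R] L, f 0 = LinearMap.id ∧
    (∀ (n : ℕ) {g : G} {a : L}, a ∈ cl.grading g → f n a ∈ cl.grading g) ∧
    ∀ (r : ℕ) (a b : L),
      ∑ s ∈ Finset.range (r + 1), f s (D.μ (r - s) a b) =
      ∑ q ∈ Finset.range (r + 1), cl.bracket (f q a) (f (r - q) b)

/-- `ψ` is a graded Chevalley–Eilenberg 2-cocycle of degree `e` of `L` with values
in the adjoint module `L`. -/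
def IsCocycle2Adj (cl : ColorLie R G ε L) (ψ : L →ₗ[R] L →ₗ[R] L) : Prop :=
  (∀ {g h : G} {a b : L}, a ∈ cl.grading g → b ∈ cl.grading h →
    ψ a b ∈ cl.grading (g * h)) ∧
  (∀ {g h : G} {a b : L}, a ∈ cl.grading g → b ∈ cl.grading h →
    ψ a b = -(ε g h) • ψ b a) ∧
  (∀ {g h k : G} {x y z : L}, x ∈ cl.grading g → y ∈ cl.grading h →
    z ∈ cl.grading k →
    cl.bracket x (ψ y z) - ε g h • cl.bracket y (ψ x z)
      + (ε g k * ε h k) • cl.bracket z (ψ x y)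
      - ε g h • ψ (cl.bracket x y) z + (ε g k * ε h k) • ψ (cl.bracket x z) y
      - (ε g h * ε g k * ε h k) • ψ (cl.bracket y z) x = 0)

/-- `ψ` is a graded Chevalley–Eilenberg 2-coboundary of degree `e` with values in
the adjoint module: `ψ = δ_CE f` for some degree-`e` 1-cochain `f`. -/
def IsCoboundary2Adj (cl : ColorLie R G ε L) (ψ : L →ₗ[R] L →ₗ[R] L) : Prop :=
  ∃ f : L →ₗ[R] L, (∀ {g : G} {a : L}, a ∈ cl.grading g → f a ∈ cl.grading g) ∧
    ∀ {g h : G} {x y : L}, x ∈ cl.grading g → y ∈ cl.grading h →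
      ψ x y = cl.bracket x (f y) - ε g h • cl.bracket y (f x) - f (cl.bracket x y)

/-- `ω` is a graded Chevalley–Eilenberg 2-cocycle of degree `e` of `L` with values
in the trivial module `R` (concentrated in degree `e`). -/
def IsCocycleTriv (cl : ColorLie R G ε L) (ω : L →ₗ[R] L →ₗ[R] R) : Prop :=
  (∀ {g h : G} {a b : L}, a ∈ cl.grading g → b ∈ cl.grading h → g * h ≠ 1 →
    ω a b = 0) ∧
  (∀ {g h : G} {a b : L}, a ∈ cl.grading g → b ∈ cl.grading h →
    ω a b = -(ε g h) * ω b a) ∧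
  (∀ {g h k : G} {x y z : L}, x ∈ cl.grading g → y ∈ cl.grading h →
    z ∈ cl.grading k →
    -(ε g h) * ω (cl.bracket x y) z + (ε g k * ε h k) * ω (cl.bracket x z) y
      - (ε g h * ε g k * ε h k) * ω (cl.bracket y z) x = 0)

/-- `ω` is a graded 2-coboundary of degree `e` with values in the trivial module `R`. -/
def IsCoboundaryTriv (cl : ColorLie R G ε L) (ω : L →ₗ[R] L →ₗ[R] R) : Prop :=
  ∃ f : L →ₗ[R] R, (∀ {g : G} {a : L}, a ∈ cl.grading g → g ≠ 1 → f a = 0) ∧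
    ∀ {g h : G} {x y : L}, x ∈ cl.grading g → y ∈ cl.grading h →
      ω x y = -(f (cl.bracket x y))

end ColorLie

/-- A graded associative (formal) deformation `π_t = Σ tⁿ π_n` of a `G`-graded
associative algebra `A` (with grading `𝒜`): `π₀` is the original multiplication,
every coefficient `π_n` is of degree `e`, and `π_t` is associative order by
order in `t`. -/
structure AssocDeformation (R : Type*) (G : Type*) [CommRing R] [CommGroup G]
    (A : Type*) [Ring A] [Algebra R A] (𝒜 : G → Submodule R A) : Type _ where
  π : ℕ → A →ₗ[R] A →ₗ[R] A
  init : ∀ a b : A, π 0 a b = a * b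
  graded : ∀ (n : ℕ) {g h : G} {a b : A}, a ∈ 𝒜 g → b ∈ 𝒜 h → π n a b ∈ 𝒜 (g * h)
  assoc : ∀ (r : ℕ) (a b c : A),
    ∑ s ∈ Finset.range (r + 1), π s (π (r - s) a b) c =
    ∑ s ∈ Finset.range (r + 1), π s a (π (r - s) b c)

/-- A graded associative deformation is trivial iff it is conjugate to the
undeformed multiplication by a graded formal isomorphism
`φ_t = id + t φ₁ + t² φ₂ + ⋯` with each `φ_r` of degree `e`. -/
def AssocDeformation.IsTrivial {R G A : Type*} [CommRing R] [CommGroup G]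
    [Ring A] [Algebra R A] {𝒜 : G → Submodule R A}
    (D : AssocDeformation R G A 𝒜) : Prop :=
  ∃ f : ℕ → A →ₗ[R] A, f 0 = LinearMap.id ∧
    (∀ (n : ℕ) {g : G} {a : A}, a ∈ 𝒜 g → f n a ∈ 𝒜 g) ∧
    ∀ (r : ℕ) (a b : A),
      ∑ s ∈ Finset.range (r + 1), f s (D.π (r - s) a b) =
      ∑ q ∈ Finset.range (r + 1), f q a * f (r - q) b
/-- The space of linear maps `M → M` homogeneous of degree `α` with respect to a
`G`-grading `ℳ` of `M`. -/
def HomDeg {R : Type*} [CommRing R] {G : Type*} [CommGroup G]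
    {M : Type*} [AddCommGroup M] [Module R M]
    (ℳ : G → Submodule R M) (α : G) : Submodule R (M →ₗ[R] M) where
  carrier := { f | ∀ (β : G), ∀ x ∈ ℳ β, f x ∈ ℳ (α * β) }
  add_mem' := by
    intro f g hf hg β x hx
    simpa using add_mem (hf β x hx) (hg β x hx)
  zero_mem' := by
    intro β x hx
    simp
  smul_mem' := by
    intro c f hf β x hx
    simpa using Submodule.smul_mem _ c (hf β x hx)

/-- The graded Chevalley–Eilenberg coboundary operator, on cochains recorded
together with the degrees of their (homogeneous) arguments.  For a cochain `f`
of degree `γ`, arguments `x` with degrees `α`,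
`δf(x₁,…,x_{n+2}) = Σᵢ (-1)^{i+1} ε(γ,αᵢ) εᵢ xᵢ · f(…,x̂ᵢ,…)
  + Σ_{i<j} (-1)^{i+j} ε(γ,αᵢ) ε(γ,αⱼ) εᵢ εⱼ f([xᵢ,xⱼ],…,x̂ᵢ,…,x̂ⱼ,…)`
with `εᵢ = Π_{h<i} ε(α_h,αᵢ)` (indices are 1-based in the informal formula). -/
def ceD {R : Type*} [CommRing R] {G : Type*} [CommGroup G]
    {L : Type*} [AddCommGroup L] [Module R L]
    {N : Type*} [AddCommGroup N] [Module R N]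
    (ε : G → G → R) (bracket : L →ₗ[R] L →ₗ[R] L) (ρ : L →ₗ[R] N →ₗ[R] N)
    (γ : G) {n : ℕ}
    (f : (Fin (n + 1) → G) → (Fin (n + 1) → L) → N)
    (α : Fin (n + 2) → G) (x : Fin (n + 2) → L) : N :=
  (∑ i : Fin (n + 2),
    ((-1 : ℤ) ^ (i : ℕ)) •
      ((ε γ (α i) * ∏ h ∈ Finset.univ.filter (fun h : Fin (n + 2) => h < i),
          ε (α h) (α i)) •
        ρ (x i) (f (Fin.removeNth i α) (Fin.removeNth i x))))
  + ∑ i : Fin (n + 2), ∑ j : Fin (n + 2),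
      if hij : i < j then
        ((-1 : ℤ) ^ ((i : ℕ) + (j : ℕ))) •
          ((ε γ (α i) * ε γ (α j) *
            (∏ h ∈ Finset.univ.filter (fun h : Fin (n + 2) => h < i), ε (α h) (α i)) *
            (∏ h ∈ Finset.univ.filter (fun h : Fin (n + 2) => h < j), ε (α h) (α j))) •
            f (Fin.cons (α i * α j)
                (Fin.removeNth ⟨i.1, by
                  have h1 := j.isLt
                  have h2 : (i : ℕ) < (j : ℕ) := hij
                  omega⟩ (Fin.removeNth j α)))
              (Fin.cons (bracket (x i) (x j))
                (Fin.removeNth ⟨i.1, by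
                  have h1 := j.isLt
                  have h2 : (i : ℕ) < (j : ℕ) := hij
                  omega⟩ (Fin.removeNth j x))))
      else 0

namespace ColorLie

variable {R : Type*} [CommRing R] {G : Type*} [CommGroup G] [DecidableEq G]
  {ε : G → G → R} {L : Type*} [AddCommGroup L] [Module R L]

/-- The `n`-th coefficient of the star product induced on the associated graded
algebra by a symmetrization isomorphism `ω`:
for `u ∈ gr^p(U(L))`, `v ∈ gr^q(U(L))`,
`m_n(u,v) = ω⁻¹((ω(u) ∘ ω(v))_{p+q-n}) ∈ gr^{p+q-n}(U(L))`. -/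
noncomputable def starCoef (cl : ColorLie R G ε L)
    (ω : (⨁ n : ℕ, cl.grU n) ≃ₗ[R] cl.U) (n p q : ℕ)
    (u : cl.grU p) (v : cl.grU q) : cl.grU (p + q - n) :=
  DirectSum.component R ℕ (fun m => cl.grU m) (p + q - n)
    (ω.symm (ω (DirectSum.lof R ℕ (fun m => cl.grU m) p u) *
      ω (DirectSum.lof R ℕ (fun m => cl.grU m) q v)))

end ColorLie

/-- Extraction of the `n`-th power series coefficient of an element of
`R[[t]] ⊗ M`, i.e. of "`M[[t]]`" for `M` finite dimensional. -/
noncomputable def coeffPS (K : Type*) [CommRing K] (M : Type*) [AddCommGroup M]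
    [Module K M] (n : ℕ) : (PowerSeries K ⊗[K] M) →ₗ[K] M :=
  (TensorProduct.lid K M).toLinearMap ∘ₗ LinearMap.rTensor M (PowerSeries.coeff (R := K) n)

/-- The relation whose `RingQuot` is the quotient of `A` by the two-sided ideal
generated by `1 - c`. -/
def unitRel {A : Type*} [Ring A] (c : A) : A → A → Prop := fun x y => x = 1 ∧ y = c

/-- The Poincaré–Birkhoff–Witt admissibility condition on an ordered monomial:
indices weakly increase, with strict increase required at an index `i` whenever
`ε(|x_i|,|x_i|) ≠ 1`. -/
def PBWAdmissible {R : Type*} [CommRing R] {G : Type*} [CommGroup G]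
    {I : Type*} [LinearOrder I] (ε : G → G → R) (deg : I → G) (l : List I) : Prop :=
  l.Chain' fun i j => i < j ∨ (i = j ∧ ε (deg i) (deg i) = 1)

/-!
Everything rests on one estimate: for homogeneous `u ∈ U_n`, `v ∈ U_m` of degrees `g`, `h`, the
`ε`-commutator `uv - ε(g,h) vu` lies in `U_{n+m-1}`. By bilinearity it suffices to check this on
graded monomials `ι(a₁) ⋯ ι(aₖ)`, where it follows by induction from the defining relation
`ι(a)ι(b) - ε(|a|,|b|) ι(b)ι(a) = ι[a,b]` and the `ε`-Leibniz rules for commutators in an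
associative algebra. To write a homogeneous element of `U_n` as a combination of graded monomials
of the same degree, project with the coaction `U → U[G]`, `ι(a) ↦ g · ι(a)` for `a ∈ L_g`.
Antisymmetry, the Jacobi identity and the Leibniz rule already hold in `U` as identities of
associative algebra, so they pass to the quotients `gr^k`.
-/

namespace IsBicharacter

variable {R G : Type*} [CommRing R] [CommGroup G] {ε : G → G → R}

theorem apply_one_right (hε : IsBicharacter ε) (g : G) : ε g 1 = 1 := by
  have h := hε.2.1 g 1 1
  rw [one_mul] at h
  linear_combination (-ε 1 g) * h + (1 - ε g 1) * hε.1 g 1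

theorem apply_one_left (hε : IsBicharacter ε) (g : G) : ε 1 g = 1 := by
  simpa [hε.apply_one_right g] using hε.1 1 g

variable {A : Type*} [Ring A] [Algebra R A]

theorem colorComm_mul_right (hε : IsBicharacter ε) (g h k : G) (x y z : A) :
    x * (y * z) - ε g (h * k) • (y * z * x) =
      (x * y - ε g h • (y * x)) * z + ε g h • (y * (x * z - ε g k • (z * x))) := by
  rw [hε.2.1]
  simp only [mul_sub, sub_mul, smul_sub, smul_smul, smul_mul_assoc, mul_smul_comm, mul_assoc]
  abel

theorem colorComm_mul_left (hε : IsBicharacter ε) (g h k : G) (x y z : A) :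
    x * y * z - ε (g * h) k • (z * (x * y)) =
      x * (y * z - ε h k • (z * y)) + ε h k • ((x * z - ε g k • (z * x)) * y) := by
  rw [hε.2.2, mul_comm (ε g k)]
  simp only [mul_sub, sub_mul, smul_sub, smul_smul, smul_mul_assoc, mul_smul_comm, mul_assoc]
  abel

theorem colorComm_antisymm (hε : IsBicharacter ε) (g h : G) (x y : A) :
    x * y - ε g h • (y * x) = -ε g h • (y * x - ε h g • (x * y)) := by
  rw [smul_sub, smul_smul, neg_mul, hε.1, neg_smul, neg_smul, one_smul]
  abel

theorem colorComm_jacobi (hε : IsBicharacter ε) (g h k : G) (x y z : A) :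
    ε k g • (x * (y * z - ε h k • (z * y)) - ε g (h * k) • ((y * z - ε h k • (z * y)) * x)) +
    ε g h • (y * (z * x - ε k g • (x * z)) - ε h (k * g) • ((z * x - ε k g • (x * z)) * y)) +
    ε h k • (z * (x * y - ε g h • (y * x)) - ε k (g * h) • ((x * y - ε g h • (y * x)) * z)) =
      0 := by
  rw [hε.2.1, hε.2.1, hε.2.1]
  simp only [mul_sub, sub_mul, smul_sub, smul_smul, smul_mul_assoc, mul_smul_comm, mul_assoc]
  have hgk := hε.1 g k
  have hhg := hε.1 h g
  have hkh := hε.1 k h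
  match_scalars
  · linear_combination (-ε k g) * hkh
  · linear_combination (ε k g * ε h k) * hhg
  · linear_combination (-ε g h) * hgk
  · linear_combination (ε g h * ε h k) * hgk
  · linear_combination (ε g h * ε k g) * hkh
  · linear_combination (-ε h k) * hhg

end IsBicharacter

namespace ColorLie

variable {R : Type*} [CommRing R] {G : Type*} [CommGroup G] [DecidableEq G]
  {ε : G → G → R} {L : Type*} [AddCommGroup L] [Module R L] (cl : ColorLie R G ε L)

theorem ιU_mul_ιU_sub {g h : G} {a b : L} (ha : a ∈ cl.grading g) (hb : b ∈ cl.grading h) :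
    cl.ιU a * cl.ιU b - ε g h • (cl.ιU b * cl.ιU a) = cl.ιU (cl.bracket a b) := by
  simpa [ιU] using RingQuot.mkAlgHom_rel R (Rel.mk ha hb)

theorem ιU_mem_Ufilt_one (a : L) : cl.ιU a ∈ cl.Ufilt 1 :=
  Submodule.subset_span ⟨[a], le_rfl, by simp⟩

theorem Ufilt_mono {n m : ℕ} (h : n ≤ m) : cl.Ufilt n ≤ cl.Ufilt m :=
  Submodule.span_mono fun _ ⟨l, hl, hx⟩ => ⟨l, hl.trans h, hx⟩

theorem Ufilt_mul_le (n m : ℕ) : cl.Ufilt n * cl.Ufilt m ≤ cl.Ufilt (n + m) := by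
  rw [Ufilt, Ufilt, Submodule.span_mul_span, Submodule.span_le]
  rintro _ ⟨_, ⟨l, hl, rfl⟩, _, ⟨l', hl', rfl⟩, rfl⟩
  exact Submodule.subset_span ⟨l ++ l', by simp; omega, by simp⟩

theorem mul_mem_Ufilt {n m : ℕ} {u v : cl.U} (hu : u ∈ cl.Ufilt n) (hv : v ∈ cl.Ufilt m) :
    u * v ∈ cl.Ufilt (n + m) :=
  cl.Ufilt_mul_le n m (Submodule.mul_mem_mul hu hv)

theorem Ufilt_le_UfiltPred {n m : ℕ} (h : n < m) : cl.Ufilt n ≤ cl.UfiltPred m := by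
  obtain ⟨m, rfl⟩ : ∃ k, m = k + 1 := ⟨m - 1, by omega⟩
  exact cl.Ufilt_mono (by omega)

theorem UfiltPred_le_Ufilt_sub_one (n : ℕ) : cl.UfiltPred n ≤ cl.Ufilt (n - 1) := by
  cases n with
  | zero => exact bot_le
  | succ n => exact le_rfl

theorem mul_mem_UfiltPred {n m : ℕ} {u v : cl.U} (hu : u ∈ cl.Ufilt n)
    (hv : v ∈ cl.UfiltPred m) : u * v ∈ cl.UfiltPred (n + m) := by
  cases m with
  | zero => simp_all [UfiltPred]
  | succ m => exact cl.mul_mem_Ufilt hu hv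

theorem πgr_eq_πgr_iff {n : ℕ} (x y : cl.Ufilt n) :
    cl.πgr n x = cl.πgr n y ↔ (x : cl.U) - y ∈ cl.UfiltPred n :=
  Submodule.Quotient.eq _

/-- `x = ι(a₁) ⋯ ι(aₖ)` with `aᵢ` homogeneous of total degree `g` and `k ≤ n` (whence `one` at
every `n`). -/
inductive IsGradedMonomial : ℕ → G → cl.U → Prop
  | one (n : ℕ) : IsGradedMonomial n 1 1
  | ιU_mul {n : ℕ} {g h : G} {a : L} {x : cl.U} (ha : a ∈ cl.grading g) :
      IsGradedMonomial n h x → IsGradedMonomial (n + 1) (g * h) (cl.ιU a * x)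

namespace IsGradedMonomial

variable {cl}

theorem mono {n m : ℕ} {g : G} {x : cl.U} (hx : cl.IsGradedMonomial n g x) (h : n ≤ m) :
    cl.IsGradedMonomial m g x := by
  induction hx generalizing m with
  | one => exact one m
  | ιU_mul ha _ ih =>
    obtain ⟨m, rfl⟩ : ∃ k, m = k + 1 := ⟨m - 1, by omega⟩
    exact ιU_mul ha (ih (by omega))

theorem mem_Ufilt {n : ℕ} {g : G} {x : cl.U} (hx : cl.IsGradedMonomial n g x) :
    x ∈ cl.Ufilt n := by
  induction hx with
  | one n => exact Submodule.subset_span ⟨[], by simp, by simp⟩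
  | ιU_mul _ _ ih => simpa [add_comm] using cl.mul_mem_Ufilt (cl.ιU_mem_Ufilt_one _) ih

end IsGradedMonomial

theorem isGradedMonomial_list_prod (l : List (G × L)) (hl : ∀ p ∈ l, p.2 ∈ cl.grading p.1) :
    cl.IsGradedMonomial l.length (l.map Prod.fst).prod (l.map fun p => cl.ιU p.2).prod := by
  induction l with
  | nil => exact .one 0
  | cons p l ih =>
    simpa using .ιU_mul (hl p (by simp)) (ih fun q hq => hl q (by simp [hq]))

theorem Ufilt_le_span_isGradedMonomial (n : ℕ) :
    cl.Ufilt n ≤ Submodule.span R {x | ∃ g, cl.IsGradedMonomial n g x} := by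
  have hιU (a : L) : cl.ιU a ∈ Submodule.span R (cl.ιU '' ⋃ g, (cl.grading g : Set L)) := by
    rw [Submodule.span_image, ← Submodule.iSup_eq_span, cl.internal.submodule_iSup_eq_top]
    exact Submodule.mem_map_of_mem Submodule.mem_top
  have hprod (l : List L) : (l.map cl.ιU).prod ∈
      Submodule.span R {x | ∃ g, cl.IsGradedMonomial l.length g x} := by
    induction l with
    | nil => exact Submodule.subset_span (show ∃ g, _ from ⟨1, .one 0⟩)
    | cons a l ih =>
      have hmul := Submodule.mul_mem_mul (hιU a) ih
      rw [Submodule.span_mul_span] at hmul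
      refine Submodule.span_mono ?_ hmul
      rintro _ ⟨_, ⟨b, hb, rfl⟩, x, ⟨h, hx⟩, rfl⟩
      obtain ⟨g, hb⟩ := Set.mem_iUnion.1 hb
      exact ⟨g * h, .ιU_mul hb hx⟩
  rw [Ufilt, Submodule.span_le]
  rintro _ ⟨l, hl, rfl⟩
  exact Submodule.span_mono (fun _ hx => hx.imp fun _ hx => hx.mono hl) (hprod l)

noncomputable def ιUWithDegree : L →ₗ[R] MonoidAlgebra cl.U G :=
  DirectSum.toModule R G _ (fun g => MonoidAlgebra.lsingle g ∘ₗ cl.ιU ∘ₗ (cl.grading g).subtype) ∘ₗ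
    (LinearEquiv.ofBijective (DirectSum.coeLinearMap cl.grading) cl.internal).symm.toLinearMap

theorem ιUWithDegree_of_mem {g : G} {a : L} (ha : a ∈ cl.grading g) :
    cl.ιUWithDegree a = MonoidAlgebra.single g (cl.ιU a) := by
  have hdecomp : (LinearEquiv.ofBijective (DirectSum.coeLinearMap cl.grading) cl.internal).symm a =
      DirectSum.lof R G (fun g => cl.grading g) g ⟨a, ha⟩ := by
    rw [LinearEquiv.symm_apply_eq, DirectSum.lof_eq_of]
    exact (DirectSum.coeLinearMap_of cl.grading g ⟨a, ha⟩).symm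
  simp [ιUWithDegree, hdecomp, MonoidAlgebra.lsingle_apply]

noncomputable def degreeCoaction : cl.U →ₐ[R] MonoidAlgebra cl.U G :=
  RingQuot.liftAlgHom R ⟨TensorAlgebra.lift R cl.ιUWithDegree, fun _ _ hr => by
    obtain @⟨g, h, a, b, ha, hb⟩ := hr
    simp only [map_sub, map_smul, map_mul, TensorAlgebra.lift_ι_apply, cl.ιUWithDegree_of_mem ha,
      cl.ιUWithDegree_of_mem hb, cl.ιUWithDegree_of_mem (cl.bracket_grade ha hb),
      MonoidAlgebra.single_mul_single, mul_comm h g, MonoidAlgebra.smul_single,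
      ← MonoidAlgebra.single_sub, cl.ιU_mul_ιU_sub ha hb]⟩

theorem degreeCoaction_ιU (a : L) : cl.degreeCoaction (cl.ιU a) = cl.ιUWithDegree a := by
  simp [degreeCoaction, ιU]

theorem IsGradedMonomial.degreeCoaction {n : ℕ} {g : G} {x : cl.U}
    (hx : cl.IsGradedMonomial n g x) : cl.degreeCoaction x = MonoidAlgebra.single g x := by
  induction hx with
  | one => simp [MonoidAlgebra.one_def]
  | ιU_mul ha _ ih =>
    rw [map_mul, ih, degreeCoaction_ιU, cl.ιUWithDegree_of_mem ha, MonoidAlgebra.single_mul_single]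

noncomputable def homogeneousComponent (g : G) : cl.U →ₗ[R] cl.U :=
  Finsupp.lapply g ∘ₗ (MonoidAlgebra.coeffLinearEquiv R).toLinearMap ∘ₗ
    cl.degreeCoaction.toLinearMap

theorem IsGradedMonomial.homogeneousComponent {n : ℕ} {g h : G} {x : cl.U}
    (hx : cl.IsGradedMonomial n h x) : cl.homogeneousComponent g x = if h = g then x else 0 := by
  simp [ColorLie.homogeneousComponent, hx.degreeCoaction, Finsupp.single_apply]

theorem homogeneousComponent_of_mem_Udeg {g : G} {u : cl.U} (hu : u ∈ cl.Udeg g) :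
    cl.homogeneousComponent g u = u := by
  induction hu using Submodule.span_induction with
  | mem x hx =>
    obtain ⟨l, hl, rfl, rfl⟩ := hx
    rw [(cl.isGradedMonomial_list_prod l hl).homogeneousComponent, if_pos rfl]
  | zero => exact map_zero _
  | add x y _ _ hx hy => rw [map_add, hx, hy]
  | smul c x _ hx => rw [map_smul, hx]

theorem mem_span_isGradedMonomial {n : ℕ} {g : G} {u : cl.U} (hn : u ∈ cl.Ufilt n)
    (hg : u ∈ cl.Udeg g) : u ∈ Submodule.span R {x | cl.IsGradedMonomial n g x} := by
  rw [← cl.homogeneousComponent_of_mem_Udeg hg]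
  refine (Submodule.map_span_le _ _ _).2 ?_ (Submodule.mem_map_of_mem
    (cl.Ufilt_le_span_isGradedMonomial n hn))
  rintro x ⟨h, hx⟩
  rw [hx.homogeneousComponent]
  split_ifs with hhg
  · exact Submodule.subset_span (hhg ▸ hx)
  · exact zero_mem _

variable {cl}

theorem IsGradedMonomial.ιU_colorComm_mem_Ufilt (hε : IsBicharacter ε) {m : ℕ} {g h : G} {a : L}
    {y : cl.U} (ha : a ∈ cl.grading g) (hy : cl.IsGradedMonomial m h y) :
    cl.ιU a * y - ε g h • (y * cl.ιU a) ∈ cl.Ufilt m := by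
  induction hy with
  | one => simp [hε.apply_one_right]
  | @ιU_mul m k h b y hb hy ih =>
    rw [hε.colorComm_mul_right, cl.ιU_mul_ιU_sub ha hb, add_comm m]
    exact add_mem (cl.mul_mem_Ufilt (cl.ιU_mem_Ufilt_one _) hy.mem_Ufilt)
      (Submodule.smul_mem _ _ (cl.mul_mem_Ufilt (cl.ιU_mem_Ufilt_one b) ih))

theorem IsGradedMonomial.colorComm_mem_UfiltPred (hε : IsBicharacter ε) {n m : ℕ} {g h : G}
    {x y : cl.U} (hx : cl.IsGradedMonomial n g x) (hy : cl.IsGradedMonomial m h y) :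
    x * y - ε g h • (y * x) ∈ cl.UfiltPred (n + m) := by
  induction hx with
  | one => simp [hε.apply_one_left]
  | @ιU_mul n g k a x ha hx ih =>
    rw [hε.colorComm_mul_left]
    refine add_mem ?_ (Submodule.smul_mem _ _ ?_)
    · simpa only [Nat.add_right_comm, add_comm 1] using
        cl.mul_mem_UfiltPred (cl.ιU_mem_Ufilt_one a) ih
    · exact cl.Ufilt_le_UfiltPred (by omega)
        (cl.mul_mem_Ufilt (hy.ιU_colorComm_mem_Ufilt hε ha) hx.mem_Ufilt)

theorem colorComm_mem_UfiltPred (hε : IsBicharacter ε) {n m : ℕ} {g h : G} {u v : cl.U}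
    (hun : u ∈ cl.Ufilt n) (hvm : v ∈ cl.Ufilt m) (hug : u ∈ cl.Udeg g) (hvh : v ∈ cl.Udeg h) :
    u * v - ε g h • (v * u) ∈ cl.UfiltPred (n + m) := by
  let c : cl.U →ₗ[R] cl.U →ₗ[R] cl.U := LinearMap.mul R cl.U - ε g h • (LinearMap.mul R cl.U).flip
  have hle : Submodule.map₂ c (Submodule.span R {x | cl.IsGradedMonomial n g x})
      (Submodule.span R {y | cl.IsGradedMonomial m h y}) ≤ cl.UfiltPred (n + m) := by
    rw [Submodule.map₂_span_span, Submodule.span_le]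
    rintro _ ⟨x, hx, y, hy, rfl⟩
    exact hx.colorComm_mem_UfiltPred hε hy
  exact hle (Submodule.apply_mem_map₂ c (cl.mem_span_isGradedMonomial hun hug)
    (cl.mem_span_isGradedMonomial hvm hvh))

theorem colorComm_mem_UfiltPred_of_mem_UfiltPred (hε : IsBicharacter ε) {n m : ℕ} {g h : G}
    {u v : cl.U} (hun : u ∈ cl.UfiltPred n) (hvm : v ∈ cl.Ufilt m) (hug : u ∈ cl.Udeg g)
    (hvh : v ∈ cl.Udeg h) : u * v - ε g h • (v * u) ∈ cl.UfiltPred (n + m - 1) := by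
  cases n with
  | zero => simp_all [UfiltPred]
  | succ n => simpa [Nat.add_right_comm] using cl.colorComm_mem_UfiltPred hε hun hvm hug hvh

theorem colorComm_sub_colorComm_mem_UfiltPred (hε : IsBicharacter ε) {n m : ℕ} {g h : G}
    {u u' v v' : cl.U} (hu' : u' ∈ cl.Ufilt n) (hv : v ∈ cl.Ufilt m) (hug : u ∈ cl.Udeg g)
    (hug' : u' ∈ cl.Udeg g) (hvh : v ∈ cl.Udeg h) (hvh' : v' ∈ cl.Udeg h)
    (hdu : u - u' ∈ cl.UfiltPred n) (hdv : v - v' ∈ cl.UfiltPred m) :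
    (u * v - ε g h • (v * u)) - (u' * v' - ε g h • (v' * u')) ∈ cl.UfiltPred (n + m - 1) := by
  have hsplit : (u * v - ε g h • (v * u)) - (u' * v' - ε g h • (v' * u')) =
      ((u - u') * v - ε g h • (v * (u - u'))) +
        -ε g h • ((v - v') * u' - ε h g • (u' * (v - v'))) := by
    rw [← hε.colorComm_antisymm]
    simp only [sub_mul, mul_sub, smul_sub]
    abel
  rw [hsplit]
  refine add_mem (cl.colorComm_mem_UfiltPred_of_mem_UfiltPred hε hdu hv (sub_mem hug hug') hvh) ?_
  simpa only [add_comm m] using Submodule.smul_mem _ (-ε g h)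
    (cl.colorComm_mem_UfiltPred_of_mem_UfiltPred hε hdv hu' (sub_mem hvh hvh') hug')

end ColorLie

theorem grU_isColorPoisson_general
    {K : Type*} [Field K] {G : Type*} [CommGroup G] [DecidableEq G]
    {L : Type*} [AddCommGroup L] [Module K L]
    {ε : G → G → K} (hε : IsBicharacter ε) (cl : ColorLie K G ε L) :
    -- (a) the bracket is defined: commutators drop the filtration degree by one
    (∀ (n m : ℕ) (g h : G) (u v : cl.U), u ∈ cl.Ufilt n → v ∈ cl.Ufilt m →
      u ∈ cl.Udeg g → v ∈ cl.Udeg h →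
      u * v - ε g h • (v * u) ∈ cl.Ufilt (n + m - 1)) ∧
    -- (b) the bracket is well defined: it does not depend on the representatives
    (∀ (n m : ℕ) (g h : G) (u u' v v' : cl.U),
      u ∈ cl.Ufilt n → u' ∈ cl.Ufilt n → v ∈ cl.Ufilt m → v' ∈ cl.Ufilt m →
      u ∈ cl.Udeg g → u' ∈ cl.Udeg g → v ∈ cl.Udeg h → v' ∈ cl.Udeg h →
      u - u' ∈ cl.UfiltPred n → v - v' ∈ cl.UfiltPred m →
      ∀ (hc : u * v - ε g h • (v * u) ∈ cl.Ufilt (n + m - 1))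
        (hc' : u' * v' - ε g h • (v' * u') ∈ cl.Ufilt (n + m - 1)),
        cl.πgr (n + m - 1) ⟨u * v - ε g h • (v * u), hc⟩ =
        cl.πgr (n + m - 1) ⟨u' * v' - ε g h • (v' * u'), hc'⟩) ∧
    -- (c) the multiplication of `gr(U(g))` is `ε`-commutative
    (∀ (n m : ℕ) (g h : G) (u v : cl.U), u ∈ cl.Ufilt n → v ∈ cl.Ufilt m →
      u ∈ cl.Udeg g → v ∈ cl.Udeg h →
      ∀ (h1 : u * v ∈ cl.Ufilt (n + m)) (h2 : v * u ∈ cl.Ufilt (n + m)),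
        cl.πgr (n + m) ⟨u * v, h1⟩ = ε g h • cl.πgr (n + m) ⟨v * u, h2⟩) ∧
    -- (d) `ε`-antisymmetry of the bracket
    (∀ (n m : ℕ) (g h : G) (u v : cl.U), u ∈ cl.Ufilt n → v ∈ cl.Ufilt m →
      u ∈ cl.Udeg g → v ∈ cl.Udeg h →
      ∀ (h1 : u * v - ε g h • (v * u) ∈ cl.Ufilt (n + m - 1))
        (h2 : v * u - ε h g • (u * v) ∈ cl.Ufilt (n + m - 1)),
        cl.πgr (n + m - 1) ⟨u * v - ε g h • (v * u), h1⟩ =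
          -(ε g h) • cl.πgr (n + m - 1) ⟨v * u - ε h g • (u * v), h2⟩) ∧
    -- (e) the `ε`-Jacobi identity for the bracket
    (∀ (n m p : ℕ) (g h k : G) (u v w : cl.U),
      u ∈ cl.Ufilt n → v ∈ cl.Ufilt m → w ∈ cl.Ufilt p →
      u ∈ cl.Udeg g → v ∈ cl.Udeg h → w ∈ cl.Udeg k →
      ∀ (h1 : u * (v * w - ε h k • (w * v)) -
            ε g (h * k) • ((v * w - ε h k • (w * v)) * u) ∈ cl.Ufilt (n + m + p - 2))
        (h2 : v * (w * u - ε k g • (u * w)) -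
            ε h (k * g) • ((w * u - ε k g • (u * w)) * v) ∈ cl.Ufilt (n + m + p - 2))
        (h3 : w * (u * v - ε g h • (v * u)) -
            ε k (g * h) • ((u * v - ε g h • (v * u)) * w) ∈ cl.Ufilt (n + m + p - 2)),
        ε k g • cl.πgr (n + m + p - 2) ⟨_, h1⟩ +
        ε g h • cl.πgr (n + m + p - 2) ⟨_, h2⟩ +
        ε h k • cl.πgr (n + m + p - 2) ⟨_, h3⟩ = 0) ∧
    -- (f) the `ε`-Leibniz rule `{û, v̂ŵ} = {û,v̂}ŵ + ε(|u|,|v|) v̂{û,ŵ}`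
    (∀ (n m p : ℕ) (g h k : G) (u v w : cl.U),
      u ∈ cl.Ufilt n → v ∈ cl.Ufilt m → w ∈ cl.Ufilt p →
      u ∈ cl.Udeg g → v ∈ cl.Udeg h → w ∈ cl.Udeg k →
      ∀ (hL : u * (v * w) - ε g (h * k) • (v * w * u) ∈ cl.Ufilt (n + m + p - 1))
        (hR1 : (u * v - ε g h • (v * u)) * w ∈ cl.Ufilt (n + m + p - 1))
        (hR2 : v * (u * w - ε g k • (w * u)) ∈ cl.Ufilt (n + m + p - 1)),
        cl.πgr (n + m + p - 1) ⟨_, hL⟩ =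
          cl.πgr (n + m + p - 1) ⟨_, hR1⟩ +
          ε g h • cl.πgr (n + m + p - 1) ⟨_, hR2⟩) ∧
    -- (g) on `gr¹(U(g))` the bracket recovers the color Lie bracket of `g`
    (∀ (g h : G) (X Y : L), X ∈ cl.grading g → Y ∈ cl.grading h →
      ∀ (h1 : cl.ιU X * cl.ιU Y - ε g h • (cl.ιU Y * cl.ιU X) ∈ cl.Ufilt 1)
        (h2 : cl.ιU (cl.bracket X Y) ∈ cl.Ufilt 1),
        cl.πgr 1 ⟨_, h1⟩ = cl.πgr 1 ⟨_, h2⟩) := by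
  refine ⟨?_, ?_, ?_, ?_, ?_, ?_, ?_⟩
  · intro n m g h u v hun hvm hug hvh
    exact cl.UfiltPred_le_Ufilt_sub_one _ (cl.colorComm_mem_UfiltPred hε hun hvm hug hvh)
  · intro n m g h u u' v v' _ hu' hv _ hug hug' hvh hvh' hdu hdv _ _
    exact (cl.πgr_eq_πgr_iff _ _).2
      (cl.colorComm_sub_colorComm_mem_UfiltPred hε hu' hv hug hug' hvh hvh' hdu hdv)
  · intro n m g h u v hun hvm hug hvh _ _
    rw [← map_smul, cl.πgr_eq_πgr_iff]
    exact cl.colorComm_mem_UfiltPred hε hun hvm hug hvh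
  · intro n m g h u v _ _ _ _ _ _
    rw [← map_smul]
    exact congrArg _ (Subtype.ext (hε.colorComm_antisymm g h u v))
  · intro n m p g h k u v w _ _ _ _ _ _ _ _ _
    rw [← map_smul, ← map_smul, ← map_smul, ← map_add, ← map_add, ← map_zero (cl.πgr _)]
    exact congrArg _ (Subtype.ext (hε.colorComm_jacobi g h k u v w))
  · intro n m p g h k u v w _ _ _ _ _ _ _ _ _
    rw [← map_smul, ← map_add]
    exact congrArg _ (Subtype.ext (hε.colorComm_mul_right g h k u v w))
  · intro g h X Y hX hY _ _
    exact congrArg _ (Subtype.ext (cl.ιU_mul_ιU_sub hX hY))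

/-- The associated graded algebra `gr(U(g))` of the universal
enveloping algebra of a color Lie algebra `g`, with the bracket
`{û,v̂} := π_{n+m-1}(uv - ε(|u|,|v|) vu)` on homogeneous filtration classes, is a
`(G,ε)`-color Poisson algebra, and on `gr¹(U(g))` the bracket recovers the color
Lie bracket of `g`.  All identities are stated on (G-homogeneous) classes of the
filtration pieces, via the canonical projections `π_k`. -/
theorem grU_isColorPoisson
    {K : Type*} [Field K] [CharZero K] {G : Type*} [CommGroup G] [DecidableEq G]
    {L : Type*} [AddCommGroup L] [Module K L]
    {ε : G → G → K} (hε : IsBicharacter ε) (cl : ColorLie K G ε L) :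
    -- (a) the bracket is defined: commutators drop the filtration degree by one
    (∀ (n m : ℕ) (g h : G) (u v : cl.U), u ∈ cl.Ufilt n → v ∈ cl.Ufilt m →
      u ∈ cl.Udeg g → v ∈ cl.Udeg h →
      u * v - ε g h • (v * u) ∈ cl.Ufilt (n + m - 1)) ∧
    -- (b) the bracket is well defined: it does not depend on the representatives
    (∀ (n m : ℕ) (g h : G) (u u' v v' : cl.U),
      u ∈ cl.Ufilt n → u' ∈ cl.Ufilt n → v ∈ cl.Ufilt m → v' ∈ cl.Ufilt m →
      u ∈ cl.Udeg g → u' ∈ cl.Udeg g → v ∈ cl.Udeg h → v' ∈ cl.Udeg h →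
      u - u' ∈ cl.UfiltPred n → v - v' ∈ cl.UfiltPred m →
      ∀ (hc : u * v - ε g h • (v * u) ∈ cl.Ufilt (n + m - 1))
        (hc' : u' * v' - ε g h • (v' * u') ∈ cl.Ufilt (n + m - 1)),
        cl.πgr (n + m - 1) ⟨u * v - ε g h • (v * u), hc⟩ =
        cl.πgr (n + m - 1) ⟨u' * v' - ε g h • (v' * u'), hc'⟩) ∧
    -- (c) the multiplication of `gr(U(g))` is `ε`-commutative
    (∀ (n m : ℕ) (g h : G) (u v : cl.U), u ∈ cl.Ufilt n → v ∈ cl.Ufilt m →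
      u ∈ cl.Udeg g → v ∈ cl.Udeg h →
      ∀ (h1 : u * v ∈ cl.Ufilt (n + m)) (h2 : v * u ∈ cl.Ufilt (n + m)),
        cl.πgr (n + m) ⟨u * v, h1⟩ = ε g h • cl.πgr (n + m) ⟨v * u, h2⟩) ∧
    -- (d) `ε`-antisymmetry of the bracket
    (∀ (n m : ℕ) (g h : G) (u v : cl.U), u ∈ cl.Ufilt n → v ∈ cl.Ufilt m →
      u ∈ cl.Udeg g → v ∈ cl.Udeg h →
      ∀ (h1 : u * v - ε g h • (v * u) ∈ cl.Ufilt (n + m - 1))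
        (h2 : v * u - ε h g • (u * v) ∈ cl.Ufilt (n + m - 1)),
        cl.πgr (n + m - 1) ⟨u * v - ε g h • (v * u), h1⟩ =
          -(ε g h) • cl.πgr (n + m - 1) ⟨v * u - ε h g • (u * v), h2⟩) ∧
    -- (e) the `ε`-Jacobi identity for the bracket
    (∀ (n m p : ℕ) (g h k : G) (u v w : cl.U),
      u ∈ cl.Ufilt n → v ∈ cl.Ufilt m → w ∈ cl.Ufilt p →
      u ∈ cl.Udeg g → v ∈ cl.Udeg h → w ∈ cl.Udeg k →
      ∀ (h1 : u * (v * w - ε h k • (w * v)) -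
            ε g (h * k) • ((v * w - ε h k • (w * v)) * u) ∈ cl.Ufilt (n + m + p - 2))
        (h2 : v * (w * u - ε k g • (u * w)) -
            ε h (k * g) • ((w * u - ε k g • (u * w)) * v) ∈ cl.Ufilt (n + m + p - 2))
        (h3 : w * (u * v - ε g h • (v * u)) -
            ε k (g * h) • ((u * v - ε g h • (v * u)) * w) ∈ cl.Ufilt (n + m + p - 2)),
        ε k g • cl.πgr (n + m + p - 2) ⟨_, h1⟩ +
        ε g h • cl.πgr (n + m + p - 2) ⟨_, h2⟩ +
        ε h k • cl.πgr (n + m + p - 2) ⟨_, h3⟩ = 0) ∧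
    -- (f) the `ε`-Leibniz rule `{û, v̂ŵ} = {û,v̂}ŵ + ε(|u|,|v|) v̂{û,ŵ}`
    (∀ (n m p : ℕ) (g h k : G) (u v w : cl.U),
      u ∈ cl.Ufilt n → v ∈ cl.Ufilt m → w ∈ cl.Ufilt p →
      u ∈ cl.Udeg g → v ∈ cl.Udeg h → w ∈ cl.Udeg k →
      ∀ (hL : u * (v * w) - ε g (h * k) • (v * w * u) ∈ cl.Ufilt (n + m + p - 1))
        (hR1 : (u * v - ε g h • (v * u)) * w ∈ cl.Ufilt (n + m + p - 1))
        (hR2 : v * (u * w - ε g k • (w * u)) ∈ cl.Ufilt (n + m + p - 1)),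
        cl.πgr (n + m + p - 1) ⟨_, hL⟩ =
          cl.πgr (n + m + p - 1) ⟨_, hR1⟩ +
          ε g h • cl.πgr (n + m + p - 1) ⟨_, hR2⟩) ∧
    -- (g) on `gr¹(U(g))` the bracket recovers the color Lie bracket of `g`
    (∀ (g h : G) (X Y : L), X ∈ cl.grading g → Y ∈ cl.grading h →
      ∀ (h1 : cl.ιU X * cl.ιU Y - ε g h • (cl.ιU Y * cl.ιU X) ∈ cl.Ufilt 1)
        (h2 : cl.ιU (cl.bracket X Y) ∈ cl.Ufilt 1),
        cl.πgr 1 ⟨_, h1⟩ = cl.πgr 1 ⟨_, h2⟩) :=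
  grU_isColorPoisson_general hε cl
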